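/- The Dirichlet transformed-path graph Laplacian Δ_{∞,dir} = ∑_{m≥1} φ(m) Δ_{m,dir} on X⁽ⁿ⁾ = {1,...,n} with φ(m) = (−1)^{m+1}·2/m² is a symmetric n×n Toeplitz matrix with entries (Δ_{∞,dir})_{ij} = π²/3 if i = j and (Δ_{∞,dir})_{ij} = (−1)^{|i−j|}·2/|i−j|² if i ≠ j. -/

import Mathlib

/-! For `m ≥ 1` each node of `{1,…,n}` has exactly two integers at distance `m`, each counted
either as an `m`-path neighbour inside the segment or by the Dirichlet boundary potential, so
`Δ_{m,dir}` has diagonal `2` and the diagonal of the series is `2 ∑ φ(m) = 4 η(2)`, where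
`η(2) = ζ(2) - 2 · ζ(2)/4 = π²/12` (subtracting the even terms twice). Off the diagonal only the
term `m = |i - j|` survives. -/

open Real Finset

theorem hasSum_neg_one_pow_succ_div_sq :
    HasSum (fun n : ℕ => (-1 : ℝ) ^ (n + 1) / (n : ℝ) ^ 2) (π ^ 2 / 12) := by
  have hζ := hasSum_zeta_two
  have heven : HasSum (fun n : ℕ => if Even n then 1 / (n : ℝ) ^ 2 else 0) (π ^ 2 / 24) := by
    have hinj : Function.Injective (2 * · : ℕ → ℕ) := mul_right_injective₀ two_ne_zero
    have hcomp : (fun n : ℕ => if Even n then 1 / (n : ℝ) ^ 2 else 0) ∘ (2 * ·) =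
        fun k : ℕ => 1 / 4 * (1 / (k : ℝ) ^ 2) := by
      ext k
      simp only [Function.comp_apply, even_two_mul, if_true, Nat.cast_mul, Nat.cast_ofNat]
      ring
    rw [← hinj.hasSum_iff fun n hn => if_neg fun ⟨k, hk⟩ => hn ⟨k, by simp only; omega⟩, hcomp,
      show π ^ 2 / 24 = 1 / 4 * (π ^ 2 / 6) by ring]
    exact hζ.mul_left _
  have halt : (fun n : ℕ => (-1 : ℝ) ^ (n + 1) / (n : ℝ) ^ 2) =
      fun n : ℕ => 1 / (n : ℝ) ^ 2 - 2 * if Even n then 1 / (n : ℝ) ^ 2 else 0 := by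
    ext n
    rcases Nat.even_or_odd n with h | h
    · rw [if_pos h, pow_succ, h.neg_one_pow]
      ring
    · rw [if_neg (Nat.not_even_iff_odd.2 h), h.add_one.neg_one_pow]
      ring
  rw [halt, show π ^ 2 / 12 = π ^ 2 / 6 - 2 * (π ^ 2 / 24) by ring]
  exact hζ.sub (heven.mul_left 2)

theorem hasSum_pnat_neg_one_pow_succ_div_sq :
    HasSum (fun m : ℕ+ => (-1 : ℝ) ^ ((m : ℕ) + 1) / ((m : ℕ) : ℝ) ^ 2) (π ^ 2 / 12) :=
  hasSum_pnat_iff (f := fun n : ℕ => (-1 : ℝ) ^ (n + 1) / (n : ℝ) ^ 2) |>.2 <| by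
    simpa using hasSum_neg_one_pow_succ_div_sq

theorem Int.ncard_setOf_natAbs_sub_eq (x : ℤ) {m : ℕ} (hm : m ≠ 0) :
    {z : ℤ | (x - z).natAbs = m}.ncard = 2 := by
  have h : {z : ℤ | (x - z).natAbs = m} = {x - m, x + m} := by
    ext z
    simp only [Set.mem_ofPred_eq, Set.mem_insert_iff, Set.mem_singleton_iff]
    omega
  rw [h, Set.ncard_pair (by omega)]

theorem Fin.card_filter_natAbs_sub_eq_ncard_inter_Icc (n m : ℕ) (i : Fin n) :
    #{k : Fin n | ((i : ℤ) - k).natAbs = m} =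
      ({z : ℤ | ((i : ℤ) + 1 - z).natAbs = m} ∩ Set.Icc 1 n).ncard := by
  rw [← Set.ncard_coe_finset]
  refine Set.ncard_congr (fun k _ => (k : ℤ) + 1) ?_ ?_ ?_
  · intro k hk
    simp only [coe_filter, mem_univ, true_and, Set.mem_ofPred_eq] at hk
    simp only [Set.mem_inter_iff, Set.mem_ofPred_eq, Set.mem_Icc]
    omega
  · intro a b _ _ h
    exact Fin.ext (by omega)
  · rintro z ⟨hz, h1, h2⟩
    simp only [Set.mem_ofPred_eq] at hz
    refine ⟨⟨(z - 1).toNat, by omega⟩, ?_, ?_⟩ <;> simp <;> omega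

theorem Fin.card_filter_add_ncard_boundary_eq_two (n : ℕ) {m : ℕ} (hm : m ≠ 0) (i : Fin n) :
    #{k : Fin n | ((i : ℤ) - k).natAbs = m} +
      {z : ℤ | z ∉ Set.Icc (1 : ℤ) n ∧ ((i : ℤ) + 1 - z).natAbs = m}.ncard = 2 := by
  have hboundary : {z : ℤ | z ∉ Set.Icc (1 : ℤ) n ∧ ((i : ℤ) + 1 - z).natAbs = m} =
      {z : ℤ | ((i : ℤ) + 1 - z).natAbs = m} \ Set.Icc 1 n := by
    ext z
    exact and_comm
  have hfin : {z : ℤ | ((i : ℤ) + 1 - z).natAbs = m}.Finite :=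
    Set.finite_of_ncard_pos (by rw [Int.ncard_setOf_natAbs_sub_eq _ hm]; norm_num)
  rw [Fin.card_filter_natAbs_sub_eq_ncard_inter_Icc, hboundary,
    Set.ncard_inter_add_ncard_sdiff_eq_ncard _ _ hfin, Int.ncard_setOf_natAbs_sub_eq _ hm]

/-- The Dirichlet transformed-path graph Laplacian `Δ_{∞,dir} = ∑_{m≥1} φ(m) Δ_{m,dir}`
on `X⁽ⁿ⁾ = {1,…,n}` with `φ(m) = (-1)^(m+1)·2/m²` is the symmetric Toeplitz matrix
with diagonal entries `π²/3` and off-diagonal entries `(-1)^|i-j|·2/|i-j|²`.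
Here node `i+1 ∈ {1,…,n}` corresponds to the index `i : Fin n`, and `Δ_{m,dir}` has
entries given by the `m`-path neighbor count inside `{1,…,n}` plus the Dirichlet
boundary potential on the diagonal, and `-1` at pairs at distance `m`. -/
theorem transformed_path_laplacian_toeplitz
    (n : ℕ) (φ : ℕ → ℝ) (hφ : ∀ m : ℕ, 1 ≤ m → φ m = (-1 : ℝ) ^ (m + 1) * 2 / (m : ℝ) ^ 2)
    (Δ : ℕ → Matrix (Fin n) (Fin n) ℝ)
    (hΔ : ∀ m : ℕ, 1 ≤ m → ∀ i j : Fin n,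
      Δ m i j =
        if i = j then
          ((Finset.filter (fun k : Fin n => ((i : ℤ) - (k : ℤ)).natAbs = m)
              Finset.univ).card : ℝ) +
            ({z : ℤ | z ∉ Set.Icc (1 : ℤ) n ∧ ((i : ℤ) + 1 - z).natAbs = m}.ncard : ℝ)
        else if ((i : ℤ) - (j : ℤ)).natAbs = m then -1 else 0)
    (T : Matrix (Fin n) (Fin n) ℝ)
    (hT : ∀ i j : Fin n,
      T i j = if i = j then Real.pi ^ 2 / 3
        else (-1 : ℝ) ^ (((i : ℤ) - (j : ℤ)).natAbs) * 2 /
          ((((i : ℤ) - (j : ℤ)).natAbs : ℝ)) ^ 2) :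
    HasSum (fun m : ℕ+ => φ m • Δ m) T ∧ T.IsSymm := by
  refine ⟨Pi.hasSum.2 fun i => Pi.hasSum.2 fun j => ?_, Matrix.IsSymm.ext fun i j => ?_⟩
  · simp only [Matrix.smul_apply, smul_eq_mul, hT]
    split_ifs with hij
    · subst hij
      have hdiag (m : ℕ+) :
          φ m * Δ m i i = 4 * ((-1 : ℝ) ^ ((m : ℕ) + 1) / ((m : ℕ) : ℝ) ^ 2) := by
        rw [hφ m m.pos, hΔ m m.pos, if_pos rfl, ← Nat.cast_add,
          Fin.card_filter_add_ncard_boundary_eq_two n m.ne_zero i]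
        ring
      rw [funext hdiag, show π ^ 2 / 3 = 4 * (π ^ 2 / 12) by ring]
      exact hasSum_pnat_neg_one_pow_succ_div_sq.mul_left 4
    · obtain ⟨d, hd⟩ : ∃ d : ℕ+, (d : ℕ) = ((i : ℤ) - j).natAbs :=
        ⟨⟨_, Int.natAbs_sub_pos_iff.2 (by omega)⟩, rfl⟩
      have hoff (m : ℕ+) :
          φ m * Δ m i j = if m = d then (-1 : ℝ) ^ (d : ℕ) * 2 / ((d : ℕ) : ℝ) ^ 2 else 0 := by
        rw [hφ m m.pos, hΔ m m.pos, if_neg hij, ← hd]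
        simp only [PNat.coe_inj, eq_comm (a := d)]
        split_ifs with h
        · subst h
          ring
        · rw [mul_zero]
      rw [funext hoff, ← hd]
      exact hasSum_ite_eq d _
  · rw [hT, hT, ← Int.natAbs_neg, neg_sub]
    simp only [eq_comm]
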